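/- Let X be a real Hilbert space, K ⊆ X a nonempty closed convex cone, A : X → X strongly monotone with constant m_A and Lipschitz, f ∈ C(I;X), S : C(I;X) → C(I;X) a history-dependent operator, and j : X × K → ℝ satisfying condition (j) with Y = X and constant α_j. If α_j + 1 < m_A, then there exists a unique u ∈ C(I;K) such that for all t ∈ I: u(t) ∈ K and j(u(t), v) - j(u(t), u(t)) ≥ ⟨f(t) - Au(t) - Su(t), v - u(t)⟩ for all v ∈ K. -/

import Mathlib

/-!
For a fixed right-hand side `g`, the time-independent problem `⟪g - A u, v - u⟫ ≤ j u v - j u u`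
for all `v ∈ K` has a solution `σ g`: with `η` frozen in `j η`, Banach's fixed point theorem
applies to `w ↦ P (w + ρ • (g - A w))`, where `P` is the proximal map of `ρ • j η` on `K` (it
exists because `v ↦ ‖v - x‖² / 2 + ρ • j η v` is strongly convex), and then `η ↦ solution` is an
`αj / mA`-contraction. Strong monotonicity of `A` and the bound on `j` make `σ` Lipschitz with
constant `(mA - αj)⁻¹`, so the problem becomes the fixed-point equation `u t = σ (f t - S u t)`
for a history-dependent operator. On `[0, b]` the `n`-th iterate of its Picard map on
`C([0, b], X)` is `(L b)ⁿ / n!`-Lipschitz, hence a contraction for large `n`; on `[0, ∞)` the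
solutions on the intervals `[0, n]` agree and glue together.
-/

open RealInnerProductSpace Set Filter Topology

section Banach

variable {E : Type*} [NormedAddCommGroup E]

theorem exists_fixedPoint_of_norm_sub_le [CompleteSpace E] {F : E → E} {c : ℝ} (hc : c < 1)
    (hF : ∀ x y, ‖F x - F y‖ ≤ c * ‖x - y‖) : ∃ x, F x = x :=
  have hF' : ContractingWith c.toNNReal F :=
    ⟨Real.toNNReal_lt_one.2 hc,
      LipschitzWith.of_dist_le' fun x y => by simpa only [dist_eq_norm] using hF x y⟩
  ⟨_, hF'.fixedPoint_isFixedPt⟩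

variable [NormedSpace ℝ E] {K : Set E} {m d : ℝ} {F : E → ℝ}

theorem StrongConvexOn.norm_sub_sq_le (hF : StrongConvexOn K m F) (hd : ∀ z ∈ K, d ≤ F z)
    {x y : E} (hx : x ∈ K) (hy : y ∈ K) : m / 4 * ‖x - y‖ ^ 2 ≤ F x + F y - 2 * d := by
  have hmid := hF.2 hx hy (by norm_num : (0:ℝ) ≤ 1 / 2) (by norm_num : (0:ℝ) ≤ 1 / 2)
    (by norm_num)
  have hd_mid := hd _ (hF.1 hx hy (by norm_num : (0:ℝ) ≤ 1 / 2) (by norm_num : (0:ℝ) ≤ 1 / 2)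
    (by norm_num))
  simp only [smul_eq_mul] at hmid
  linarith

theorem StrongConvexOn.exists_isMinOn [CompleteSpace E] (hF : StrongConvexOn K m F) (hm : 0 < m)
    (hK : K.Nonempty) (hKc : IsClosed K) (hFc : ContinuousOn F K) (hFb : BddBelow (F '' K)) :
    ∃ w ∈ K, IsMinOn F K w := by
  set d := sInf (F '' K)
  have hd : ∀ z ∈ K, d ≤ F z := fun z hz => csInf_le hFb (mem_image_of_mem F hz)
  have hseq : ∀ n : ℕ, ∃ v ∈ K, F v < d + 1 / (n + 1) := fun n => by
    obtain ⟨_, ⟨v, hv, rfl⟩, hlt⟩ := Real.lt_sInf_add_pos (hK.image F) Nat.one_div_pos_of_nat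
    exact ⟨v, hv, hlt⟩
  choose v hvK hvF using hseq
  have hcauchy : CauchySeq v := by
    refine Metric.cauchySeq_iff'.2 fun ε hε => ?_
    obtain ⟨N, hN⟩ := exists_nat_one_div_lt (show 0 < m * ε ^ 2 / 8 by positivity)
    refine ⟨N, fun n hn => ?_⟩
    have hnN : 1 / ((n : ℝ) + 1) ≤ 1 / (N + 1) := by gcongr
    have hsq := hF.norm_sub_sq_le hd (hvK n) (hvK N)
    have hsq_lt : ‖v n - v N‖ ^ 2 < ε ^ 2 := by nlinarith [hvF n, hvF N]
    simpa only [dist_eq_norm] using lt_of_pow_lt_pow_left₀ 2 hε.le hsq_lt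
  obtain ⟨w, hw⟩ := cauchySeq_tendsto_of_complete hcauchy
  have hwK : w ∈ K := hKc.mem_of_tendsto hw (Eventually.of_forall hvK)
  have hFw : Tendsto (fun n => F (v n)) atTop (𝓝 (F w)) :=
    (hFc w hwK).tendsto.comp (tendsto_nhdsWithin_iff.2 ⟨hw, Eventually.of_forall hvK⟩)
  have hFd : F w ≤ d := le_of_tendsto_of_tendsto' hFw
    (by simpa using tendsto_one_div_add_atTop_nhds_zero_nat.const_add d) fun n => (hvF n).le
  exact ⟨w, hwK, fun z hz => hFd.trans (hd z hz)⟩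

end Banach

theorem le_of_mul_sq_le_mul {a c r : ℝ} (hr : 0 ≤ r) (hc : 0 ≤ c) (h : a * r ^ 2 ≤ c * r) :
    a * r ≤ c := by
  rcases hr.eq_or_lt with rfl | hr
  · simpa using hc
  · exact le_of_mul_le_mul_right (by linarith) hr

section Hilbert

variable {X : Type*} [NormedAddCommGroup X] [InnerProductSpace ℝ X]

def SolvesVI (K : Set X) (A : X → X) (φ : X → ℝ) (g u : X) : Prop :=
  u ∈ K ∧ ∀ v ∈ K, ⟪g - A u, v - u⟫ ≤ φ v - φ u

variable {K : Set X} {A : X → X} {φ φ₁ φ₂ : X → ℝ} {j : X → X → ℝ} {m α L : ℝ}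

theorem SolvesVI.inner_sub_le {g₁ g₂ u₁ u₂ : X} (h₁ : SolvesVI K A φ₁ g₁ u₁)
    (h₂ : SolvesVI K A φ₂ g₂ u₂) :
    ⟪A u₁ - A u₂, u₁ - u₂⟫ ≤ ⟪g₁ - g₂, u₁ - u₂⟫ + (φ₁ u₂ - φ₁ u₁ + φ₂ u₁ - φ₂ u₂) := by
  have e₁ := h₁.2 u₂ h₂.1
  have e₂ := h₂.2 u₁ h₁.1
  have hsum : ⟪g₁ - A u₁, u₂ - u₁⟫ + ⟪g₂ - A u₂, u₁ - u₂⟫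
      = ⟪A u₁ - A u₂, u₁ - u₂⟫ - ⟪g₁ - g₂, u₁ - u₂⟫ := by
    rw [← neg_sub u₁ u₂, inner_neg_right]
    simp only [inner_sub_left]
    ring
  linarith

theorem SolvesVI.norm_sub_le_of_id {x₁ x₂ p₁ p₂ : X} (h₁ : SolvesVI K id φ x₁ p₁)
    (h₂ : SolvesVI K id φ x₂ p₂) : ‖p₁ - p₂‖ ≤ ‖x₁ - x₂‖ := by
  have h := h₁.inner_sub_le h₂
  rw [id, id, real_inner_self_eq_norm_sq] at h
  have hcs := real_inner_le_norm (x₁ - x₂) (p₁ - p₂)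
  simpa using le_of_mul_sq_le_mul (norm_nonneg _) (norm_nonneg _) (a := 1) (by linarith)

theorem SolvesVI.of_isMinOn (hK : Convex ℝ K) (hφ : ConvexOn ℝ K φ) {x w : X} (hw : w ∈ K)
    (hmin : IsMinOn (fun v => ‖v - x‖ ^ 2 / 2 + φ v) K w) : SolvesVI K id φ x w := by
  refine ⟨hw, fun v hv => ?_⟩
  -- compare `w` with the points `w + t • (v - w)` of the segment towards `v`, then let `t → 0`
  have key : ∀ t ∈ Ioc (0:ℝ) 1, ⟪x - w, v - w⟫ - t / 2 * ‖v - w‖ ^ 2 ≤ φ v - φ w := by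
    rintro t ⟨ht0, ht1⟩
    have hseg : w + t • (v - w) = (1 - t) • w + t • v := by module
    have hmem : w + t • (v - w) ∈ K := hseg ▸ hK hw hv (by linarith) ht0.le (by ring)
    have hφt : φ (w + t • (v - w)) ≤ (1 - t) * φ w + t * φ v :=
      hseg ▸ hφ.2 hw hv (by linarith) ht0.le (by ring)
    have hexp : ‖w + t • (v - w) - x‖ ^ 2
        = ‖w - x‖ ^ 2 - 2 * t * ⟪x - w, v - w⟫ + t ^ 2 * ‖v - w‖ ^ 2 := by
      rw [show w + t • (v - w) - x = (w - x) + t • (v - w) by abel, norm_add_sq_real,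
        inner_smul_right, norm_smul, Real.norm_of_nonneg ht0.le, ← neg_sub x w, inner_neg_left]
      ring
    have hFt : ‖w - x‖ ^ 2 / 2 + φ w ≤ ‖w + t • (v - w) - x‖ ^ 2 / 2 + φ (w + t • (v - w)) :=
      hmin hmem
    rw [hexp] at hFt
    nlinarith
  have hlim : Tendsto (fun t : ℝ => ⟪x - w, v - w⟫ - t / 2 * ‖v - w‖ ^ 2) (𝓝[>] 0)
      (𝓝 ⟪x - w, v - w⟫) :=
    tendsto_nhdsWithin_of_tendsto_nhds (by
      simpa using ((continuous_id.div_const 2).mul continuous_const).tendsto 0 |>.const_sub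
        ⟪x - w, v - w⟫)
  exact le_of_tendsto hlim (eventually_of_mem (Ioc_mem_nhdsGT one_pos) key)

theorem exists_solvesVI_id [CompleteSpace X] (hKne : K.Nonempty) (hKcl : IsClosed K)
    (hKcv : Convex ℝ K) (hφ : ConvexOn ℝ K φ)
    (hφL : ∀ v ∈ K, ∀ w ∈ K, |φ v - φ w| ≤ L * ‖v - w‖) (x : X) : ∃ w, SolvesVI K id φ x w := by
  obtain ⟨v₀, hv₀⟩ := hKne
  have hsc : StrongConvexOn K 1 (fun v => ‖v - x‖ ^ 2 / 2 + φ v) := by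
    have hquad : (fun v => ‖v - x‖ ^ 2 / 2 + φ v - 1 / 2 * ‖v‖ ^ 2)
        = fun v => φ v + (‖x‖ ^ 2 / 2 - ⟪x, v⟫) := by
      ext v
      rw [norm_sub_sq_real, real_inner_comm]
      ring
    have haff : ConvexOn ℝ K fun v => ‖x‖ ^ 2 / 2 - ⟪x, v⟫ :=
      (convexOn_const _ hKcv).sub ((innerₛₗ ℝ x).concaveOn hKcv)
    rw [strongConvexOn_iff_convex, hquad]
    exact hφ.add haff
  have hφc : ContinuousOn φ K :=
    (LipschitzOnWith.of_dist_le' (K := L) fun v hv w hw => by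
      rw [Real.dist_eq, dist_eq_norm]
      exact hφL v hv w hw).continuousOn
  have hbdd : BddBelow ((fun v => ‖v - x‖ ^ 2 / 2 + φ v) '' K) := by
    refine ⟨φ v₀ - |L| * ‖x - v₀‖ - |L| ^ 2 / 2, ?_⟩
    rintro _ ⟨v, hv, rfl⟩
    have h₁ := (abs_le.1 (hφL v hv v₀ hv₀)).1
    have h₂ := norm_sub_le_norm_sub_add_norm_sub v x v₀
    nlinarith [sq_nonneg (‖v - x‖ - |L|), le_abs_self L, abs_nonneg L, norm_nonneg (v - v₀)]
  obtain ⟨w, hw, hmin⟩ := hsc.exists_isMinOn one_pos ⟨v₀, hv₀⟩ hKcl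
    ((continuousOn_id.sub continuousOn_const).norm.pow 2 |>.div_const 2 |>.add hφc) hbdd
  exact ⟨w, .of_isMinOn hKcv hφ hw hmin⟩

theorem norm_sub_sub_smul_sq_le (hA : ∀ u v, m * ‖u - v‖ ^ 2 ≤ ⟪A u - A v, u - v⟫)
    (hAL : ∀ u v, ‖A u - A v‖ ≤ L * ‖u - v‖) {ρ : ℝ} (hρ : 0 ≤ ρ) (u v : X) :
    ‖u - v - ρ • (A u - A v)‖ ^ 2 ≤ (1 - 2 * ρ * m + ρ ^ 2 * L ^ 2) * ‖u - v‖ ^ 2 := by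
  rw [norm_sub_sq_real, inner_smul_right, norm_smul, Real.norm_of_nonneg hρ, real_inner_comm]
  have hmono := hA u v
  have hlip : ‖A u - A v‖ ^ 2 ≤ L ^ 2 * ‖u - v‖ ^ 2 := by
    rw [← mul_pow]
    exact pow_le_pow_left₀ (norm_nonneg _) (hAL u v) 2
  nlinarith [mul_le_mul_of_nonneg_left hlip (sq_nonneg ρ)]

theorem exists_solvesVI [CompleteSpace X] (hKne : K.Nonempty) (hKcl : IsClosed K)
    (hKcv : Convex ℝ K) (hm : 0 < m) (hA : ∀ u v, m * ‖u - v‖ ^ 2 ≤ ⟪A u - A v, u - v⟫)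
    (hL : 0 < L) (hAL : ∀ u v, ‖A u - A v‖ ≤ L * ‖u - v‖) (hφ : ConvexOn ℝ K φ) {Lφ : ℝ}
    (hφL : ∀ v ∈ K, ∀ w ∈ K, |φ v - φ w| ≤ Lφ * ‖v - w‖) (g : X) : ∃ u, SolvesVI K A φ g u := by
  set ρ := m / L ^ 2
  have hρ : 0 < ρ := by positivity
  have hρφL : ∀ v ∈ K, ∀ w ∈ K, |ρ • φ v - ρ • φ w| ≤ ρ * Lφ * ‖v - w‖ := fun v hv w hw => by
    rw [smul_eq_mul, smul_eq_mul, ← mul_sub, abs_mul, abs_of_pos hρ, mul_assoc]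
    exact mul_le_mul_of_nonneg_left (hφL v hv w hw) hρ.le
  choose P hP using exists_solvesVI_id hKne hKcl hKcv (hφ.smul hρ.le) hρφL
  -- `ρ` minimises the contraction factor `1 - 2ρm + ρ²L²` of `w ↦ w - ρ • A w`
  have hfactor : 1 - 2 * ρ * m + ρ ^ 2 * L ^ 2 = 1 - m ^ 2 / L ^ 2 := by
    simp only [ρ]
    field_simp
    ring
  obtain ⟨u, hu⟩ : ∃ u, P (u + ρ • (g - A u)) = u := by
    have hc : √(1 - m ^ 2 / L ^ 2) < 1 := by
      rw [Real.sqrt_lt' one_pos, one_pow, sub_lt_self_iff]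
      positivity
    refine exists_fixedPoint_of_norm_sub_le hc fun u v => ?_
    calc ‖P (u + ρ • (g - A u)) - P (v + ρ • (g - A v))‖
        ≤ ‖u + ρ • (g - A u) - (v + ρ • (g - A v))‖ := (hP _).norm_sub_le_of_id (hP _)
      _ = ‖u - v - ρ • (A u - A v)‖ := by congr 1; module
      _ ≤ √(1 - m ^ 2 / L ^ 2) * ‖u - v‖ := by
        rw [← Real.sqrt_sq (norm_nonneg (u - v)), ← Real.sqrt_mul' _ (sq_nonneg _), ← hfactor]
        exact Real.le_sqrt_of_sq_le (norm_sub_sub_smul_sq_le hA hAL hρ.le u v)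
  refine ⟨u, hu ▸ (hP _).1, fun v hv => ?_⟩
  have h := (hP (u + ρ • (g - A u))).2 v hv
  rw [hu, id, add_sub_cancel_left, real_inner_smul_left] at h
  simp only [smul_eq_mul, ← mul_sub] at h
  exact le_of_mul_le_mul_left h hρ

theorem SolvesVI.mul_norm_sub_le (hA : ∀ u v, m * ‖u - v‖ ^ 2 ≤ ⟪A u - A v, u - v⟫)
    (hjα : ∀ η₁ η₂ : X, ∀ v₁ ∈ K, ∀ v₂ ∈ K,
      j η₁ v₂ - j η₁ v₁ + j η₂ v₁ - j η₂ v₂ ≤ α * ‖η₁ - η₂‖ * ‖v₁ - v₂‖)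
    {g₁ g₂ u₁ u₂ : X} (h₁ : SolvesVI K A (j u₁) g₁ u₁) (h₂ : SolvesVI K A (j u₂) g₂ u₂) :
    (m - α) * ‖u₁ - u₂‖ ≤ ‖g₁ - g₂‖ := by
  have h := h₁.inner_sub_le h₂
  have hj := hjα u₁ u₂ u₁ h₁.1 u₂ h₂.1
  have hmono := hA u₁ u₂
  have hcs := real_inner_le_norm (g₁ - g₂) (u₁ - u₂)
  exact le_of_mul_sq_le_mul (norm_nonneg _) (norm_nonneg _) (by nlinarith)

theorem SolvesVI.eq_of_self (hA : ∀ u v, m * ‖u - v‖ ^ 2 ≤ ⟪A u - A v, u - v⟫)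
    (hjα : ∀ η₁ η₂ : X, ∀ v₁ ∈ K, ∀ v₂ ∈ K,
      j η₁ v₂ - j η₁ v₁ + j η₂ v₁ - j η₂ v₂ ≤ α * ‖η₁ - η₂‖ * ‖v₁ - v₂‖)
    (hαm : α < m) {g u₁ u₂ : X} (h₁ : SolvesVI K A (j u₁) g u₁)
    (h₂ : SolvesVI K A (j u₂) g u₂) : u₁ = u₂ := by
  have h := h₁.mul_norm_sub_le hA hjα h₂
  rw [sub_self, norm_zero, ← mul_zero (m - α)] at h
  exact sub_eq_zero.1 (norm_le_zero_iff.1 (le_of_mul_le_mul_left h (sub_pos.2 hαm)))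

theorem exists_solvesVI_self [CompleteSpace X] (hKne : K.Nonempty) (hKcl : IsClosed K)
    (hKcv : Convex ℝ K) (hA : ∀ u v, m * ‖u - v‖ ^ 2 ≤ ⟪A u - A v, u - v⟫)
    (hL : 0 < L) (hAL : ∀ u v, ‖A u - A v‖ ≤ L * ‖u - v‖) (hj : ∀ η, ConvexOn ℝ K (j η))
    (hjL : ∀ η, ∃ Lj : ℝ, ∀ v ∈ K, ∀ w ∈ K, |j η v - j η w| ≤ Lj * ‖v - w‖) (hα : 0 ≤ α)
    (hjα : ∀ η₁ η₂ : X, ∀ v₁ ∈ K, ∀ v₂ ∈ K,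
      j η₁ v₂ - j η₁ v₁ + j η₂ v₁ - j η₂ v₂ ≤ α * ‖η₁ - η₂‖ * ‖v₁ - v₂‖)
    (hαm : α < m) (g : X) : ∃ u, SolvesVI K A (j u) g u := by
  have hm : 0 < m := hα.trans_lt hαm
  choose s hs using fun η =>
    exists_solvesVI hKne hKcl hKcv hm hA hL hAL (hj η) (hjL η).choose_spec g
  obtain ⟨u, hu⟩ := exists_fixedPoint_of_norm_sub_le (F := s) ((div_lt_one hm).2 hαm)
    fun η₁ η₂ => by
      have h := (hs η₁).inner_sub_le (hs η₂)
      have hj := hjα η₁ η₂ _ (hs η₁).1 _ (hs η₂).1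
      have hmono := hA (s η₁) (s η₂)
      rw [sub_self, inner_zero_left, zero_add] at h
      rw [div_mul_eq_mul_div, le_div_iff₀ hm, mul_comm]
      exact le_of_mul_sq_le_mul (norm_nonneg _) (by positivity) (by linarith)
  exact ⟨u, by simpa only [hu] using hs u⟩

end Hilbert

section HistoryDependent

variable {X : Type*} [NormedAddCommGroup X]

def HistoryDependentOn (Φ : (ℝ → X) → ℝ → X) (J : Set ℝ) (L : ℝ) : Prop :=
  ∀ u₁ u₂ : ℝ → X, Continuous u₁ → Continuous u₂ → ∀ t ∈ J,
    ‖Φ u₁ t - Φ u₂ t‖ ≤ L * ∫ s in (0:ℝ)..t, ‖u₁ s - u₂ s‖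

variable {Φ : (ℝ → X) → ℝ → X} {J : Set ℝ} {L b : ℝ}

theorem HistoryDependentOn.apply_eq_of_eqOn (hΦ : HistoryDependentOn Φ J L) {u₁ u₂ : ℝ → X}
    (hu₁ : Continuous u₁) (hu₂ : Continuous u₂) {t : ℝ} (ht : t ∈ J) (ht₀ : 0 ≤ t)
    (h : EqOn u₁ u₂ (Icc 0 t)) : Φ u₁ t = Φ u₂ t := by
  have hint : ∫ s in (0:ℝ)..t, ‖u₁ s - u₂ s‖ = 0 := by
    refine (intervalIntegral.integral_congr fun s hs => ?_).trans intervalIntegral.integral_zero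
    rw [uIcc_of_le ht₀] at hs
    simp [h hs]
  simpa [hint, sub_eq_zero] using hΦ u₁ u₂ hu₁ hu₂ t ht

theorem HistoryDependentOn.comp_sub (hS : HistoryDependentOn Φ J L) {σ : X → X} {κ : ℝ}
    (hκ : 0 ≤ κ) (hσ : ∀ x y, ‖σ x - σ y‖ ≤ κ * ‖x - y‖) (f : ℝ → X) :
    HistoryDependentOn (fun u t => σ (f t - Φ u t)) J (κ * L) := fun u₁ u₂ hu₁ hu₂ t ht =>
  calc ‖σ (f t - Φ u₁ t) - σ (f t - Φ u₂ t)‖ ≤ κ * ‖Φ u₁ t - Φ u₂ t‖ := by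
        simpa only [sub_sub_sub_cancel_left, norm_sub_rev] using hσ (f t - Φ u₁ t) (f t - Φ u₂ t)
    _ ≤ κ * (L * ∫ s in (0:ℝ)..t, ‖u₁ s - u₂ s‖) :=
        mul_le_mul_of_nonneg_left (hS u₁ u₂ hu₁ hu₂ t ht) hκ
    _ = κ * L * ∫ s in (0:ℝ)..t, ‖u₁ s - u₂ s‖ := (mul_assoc _ _ _).symm

noncomputable def picardMap (hb : 0 ≤ b) (Φ : (ℝ → X) → ℝ → X)
    (hΦc : ∀ u, Continuous u → Continuous (Φ u)) (e : C(Icc 0 b, X)) : C(Icc 0 b, X) :=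
  ⟨fun t => Φ (IccExtend hb e) t, (hΦc _ e.continuous.Icc_extend').comp continuous_subtype_val⟩

theorem HistoryDependentOn.norm_picardMap_iterate_sub_le (hΦ : HistoryDependentOn Φ (Icc 0 b) L)
    (hb : 0 ≤ b) (hΦc : ∀ u, Continuous u → Continuous (Φ u)) (hL : 0 ≤ L)
    (e₁ e₂ : C(Icc 0 b, X)) (n : ℕ) (t : Icc 0 b) :
    ‖(picardMap hb Φ hΦc)^[n] e₁ t - (picardMap hb Φ hΦc)^[n] e₂ t‖
      ≤ (L * t) ^ n / n.factorial * dist e₁ e₂ := by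
  induction n generalizing t with
  | zero => simpa [dist_eq_norm] using ContinuousMap.dist_apply_le_dist (f := e₁) (g := e₂) t
  | succ n ih =>
    obtain ⟨t, ht⟩ := t
    rw [Function.iterate_succ_apply', Function.iterate_succ_apply']
    set a₁ := (picardMap hb Φ hΦc)^[n] e₁
    set a₂ := (picardMap hb Φ hΦc)^[n] e₂
    have hint : ∫ s in (0:ℝ)..t, ‖IccExtend hb a₁ s - IccExtend hb a₂ s‖
        ≤ ∫ s in (0:ℝ)..t, (L * s) ^ n / n.factorial * dist e₁ e₂ := by
      refine intervalIntegral.integral_mono_on ht.1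
        ((a₁.continuous.Icc_extend'.sub a₂.continuous.Icc_extend').norm.intervalIntegrable _ _)
        ((by fun_prop : Continuous fun s : ℝ => (L * s) ^ n / n.factorial * dist e₁ e₂)
          |>.intervalIntegrable _ _) fun s hs => ?_
      have hs' : s ∈ Icc 0 b := ⟨hs.1, hs.2.trans ht.2⟩
      rw [IccExtend_of_mem hb a₁ hs', IccExtend_of_mem hb a₂ hs']
      exact ih ⟨s, hs'⟩
    have hpow : ∫ s in (0:ℝ)..t, (L * s) ^ n / n.factorial * dist e₁ e₂
        = L ^ n / n.factorial * dist e₁ e₂ * (t ^ (n + 1) / (n + 1)) := by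
      simp_rw [mul_pow, mul_div_right_comm, mul_right_comm _ (_ ^ n)]
      rw [intervalIntegral.integral_const_mul, integral_pow]
      ring
    calc ‖Φ (IccExtend hb a₁) t - Φ (IccExtend hb a₂) t‖
        ≤ L * ∫ s in (0:ℝ)..t, ‖IccExtend hb a₁ s - IccExtend hb a₂ s‖ :=
          hΦ _ _ a₁.continuous.Icc_extend' a₂.continuous.Icc_extend' t ht
      _ ≤ L * (L ^ n / n.factorial * dist e₁ e₂ * (t ^ (n + 1) / (n + 1))) := by
          rw [← hpow]; gcongr
      _ = (L * t) ^ (n + 1) / (n + 1).factorial * dist e₁ e₂ := by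
          rw [Nat.factorial_succ]
          push_cast
          field_simp
          ring

theorem HistoryDependentOn.exists_contractingWith_picardMap_iterate
    (hΦ : HistoryDependentOn Φ (Icc 0 b) L) (hb : 0 ≤ b)
    (hΦc : ∀ u, Continuous u → Continuous (Φ u)) (hL : 0 ≤ L) :
    ∃ n K, ContractingWith K (picardMap hb Φ hΦc)^[n] := by
  obtain ⟨n, hn⟩ :=
    ((FloorSemiring.tendsto_pow_div_factorial_atTop (L * b)).eventually_lt_const one_pos).exists
  refine ⟨n, _, Real.toNNReal_lt_one.2 hn, LipschitzWith.of_dist_le' fun e₁ e₂ => ?_⟩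
  refine (ContinuousMap.dist_le (by positivity)).2 fun t => ?_
  rw [dist_eq_norm]
  refine (hΦ.norm_picardMap_iterate_sub_le hb hΦc hL e₁ e₂ n t).trans ?_
  have ht := t.2
  gcongr
  · exact mul_nonneg hL ht.1
  · exact ht.2

theorem HistoryDependentOn.existsUnique_fixedPoint_Icc [CompleteSpace X]
    (hΦ : HistoryDependentOn Φ (Icc 0 b) L) (hb : 0 ≤ b)
    (hΦc : ∀ u, Continuous u → Continuous (Φ u)) (hL : 0 ≤ L) :
    ∃ u, Continuous u ∧ EqOn u (Φ u) (Icc 0 b) ∧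
      ∀ u', Continuous u' → EqOn u' (Φ u') (Icc 0 b) → EqOn u' u (Icc 0 b) := by
  obtain ⟨n, K, hK⟩ := hΦ.exists_contractingWith_picardMap_iterate hb hΦc hL
  have he := ContractingWith.isFixedPt_fixedPoint_iterate hK
  set e := hK.fixedPoint
  refine ⟨IccExtend hb e, e.continuous.Icc_extend', fun t ht => ?_, fun u' hu' hfix t ht => ?_⟩
  · rw [IccExtend_of_mem hb e ht]
    exact (DFunLike.congr_fun he ⟨t, ht⟩).symm
  · -- the restriction of `u'` to `[0, b]` is a fixed point of the Picard map, hence equals `e`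
    set e' : C(Icc 0 b, X) := ContinuousMap.restrict (Icc 0 b) ⟨u', hu'⟩
    have he' : Function.IsFixedPt (picardMap hb Φ hΦc) e' := by
      ext ⟨s, hs⟩
      refine (hΦ.apply_eq_of_eqOn e'.continuous.Icc_extend' hu' hs hs.1 fun r hr => ?_).trans
        (hfix hs).symm
      exact IccExtend_of_mem hb e' ⟨hr.1, hr.2.trans hs.2⟩
    have hee : e' = e := hK.fixedPoint_unique (he'.iterate n)
    rw [IccExtend_of_mem hb e ht, ← hee]
    rfl

theorem HistoryDependentOn.eqOn_of_fixedPoint_Icc [CompleteSpace X]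
    (hΦ : HistoryDependentOn Φ (Icc 0 b) L) (hb : 0 ≤ b)
    (hΦc : ∀ u, Continuous u → Continuous (Φ u)) (hL : 0 ≤ L) {u₁ u₂ : ℝ → X}
    (hu₁ : Continuous u₁) (hu₂ : Continuous u₂) (h₁ : EqOn u₁ (Φ u₁) (Icc 0 b))
    (h₂ : EqOn u₂ (Φ u₂) (Icc 0 b)) : EqOn u₁ u₂ (Icc 0 b) := by
  obtain ⟨u, -, -, huniq⟩ := hΦ.existsUnique_fixedPoint_Icc hb hΦc hL
  exact fun t ht => (huniq u₁ hu₁ h₁ ht).trans (huniq u₂ hu₂ h₂ ht).symm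

theorem exists_continuous_eqOn_Iic {v : ℕ → ℝ → X} (hv : ∀ n, Continuous (v n))
    (hvv : ∀ m n, m ≤ n → EqOn (v m) (v n) (Iic m)) :
    ∃ u, Continuous u ∧ ∀ n, EqOn u (v n) (Iic n) := by
  have key : ∀ (n : ℕ) (t : ℝ), t ≤ n → v ⌈t⌉₊ t = v n t := fun n t ht =>
    hvv _ _ (Nat.ceil_le.2 ht) (Nat.le_ceil t)
  refine ⟨fun t => v ⌈t⌉₊ t, continuous_iff_continuousAt.2 fun t₀ => ?_,
    fun n t ht => key n t ht⟩
  have ht₀ : t₀ < ((⌈t₀⌉₊ + 1 : ℕ) : ℝ) := by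
    push_cast
    linarith [Nat.le_ceil t₀]
  refine (hv (⌈t₀⌉₊ + 1)).continuousAt.congr ?_
  filter_upwards [Iio_mem_nhds ht₀] with t ht using (key _ t (le_of_lt ht)).symm

theorem existsUnique_fixedPoint_Ici [CompleteSpace X]
    (hΦc : ∀ u, Continuous u → Continuous (Φ u))
    (hΦ : ∀ n : ℕ, ∃ L, 0 ≤ L ∧ HistoryDependentOn Φ (Icc 0 n) L) :
    ∃ u, Continuous u ∧ EqOn u (Φ u) (Ici 0) ∧
      ∀ u', Continuous u' → EqOn u' (Φ u') (Ici 0) → EqOn u' u (Ici 0) := by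
  choose L hL hΦL using hΦ
  have hagree : ∀ (n : ℕ) {u₁ u₂ : ℝ → X}, Continuous u₁ → Continuous u₂ →
      EqOn u₁ (Φ u₁) (Icc 0 n) → EqOn u₂ (Φ u₂) (Icc 0 n) → EqOn u₁ u₂ (Icc 0 n) :=
    fun n => (hΦL n).eqOn_of_fixedPoint_Icc n.cast_nonneg hΦc (hL n)
  choose v hv hvfix using fun n : ℕ => (hΦL n).existsUnique_fixedPoint_Icc n.cast_nonneg hΦc (hL n)
  -- freeze each `v n` on `(-∞, 0]`, so that the local solutions agree on all of `(-∞, m]`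
  set w : ℕ → ℝ → X := fun n t => v n (max t 0)
  have hw : ∀ n, Continuous (w n) := fun n => (hv n).comp (continuous_id.max continuous_const)
  have hwv : ∀ n, EqOn (w n) (v n) (Ici 0) := fun n t ht => congrArg (v n) (max_eq_left ht)
  obtain ⟨u, hu, huw⟩ := exists_continuous_eqOn_Iic hw fun m n hmn t ht =>
    hagree m (hv m) (hv n) (hvfix m).1
      (fun s hs => (hvfix n).1 ⟨hs.1, hs.2.trans (by exact_mod_cast hmn)⟩)
      ⟨le_max_right t 0, max_le ht m.cast_nonneg⟩
  have hIcc : ∀ t : ℝ, 0 ≤ t → t ∈ Icc (0:ℝ) ⌈t⌉₊ := fun t ht => ⟨ht, Nat.le_ceil t⟩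
  have hufix : EqOn u (Φ u) (Ici 0) := fun t ht => by
    have hut : EqOn u (v ⌈t⌉₊) (Icc 0 t) := fun s hs =>
      (huw ⌈t⌉₊ (hs.2.trans (Nat.le_ceil t))).trans (hwv _ hs.1)
    rw [hut ⟨ht, le_rfl⟩, (hvfix _).1 (hIcc t ht),
      (hΦL _).apply_eq_of_eqOn hu (hv _) (hIcc t ht) ht hut]
  exact ⟨u, hu, hufix, fun u' hu' hfix t ht =>
    hagree _ hu' hu (fun s hs => hfix hs.1) (fun s hs => hufix hs.1) (hIcc t ht)⟩

theorem existsUnique_fixedPoint_of_historyDependentOn [CompleteSpace X] {I : Set ℝ}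
    (hI : (∃ T : ℝ, 0 < T ∧ I = Icc 0 T) ∨ I = Ici 0)
    (hΦc : ∀ u, Continuous u → Continuous (Φ u))
    (hΦ : ∀ J, IsCompact J → J ⊆ I → ∃ L, 0 ≤ L ∧ HistoryDependentOn Φ J L) :
    ∃ u, Continuous u ∧ EqOn u (Φ u) I ∧
      ∀ u', Continuous u' → EqOn u' (Φ u') I → EqOn u' u I := by
  rcases hI with ⟨T, hT, rfl⟩ | rfl
  · obtain ⟨L, hL, hΦL⟩ := hΦ _ isCompact_Icc subset_rfl
    exact hΦL.existsUnique_fixedPoint_Icc hT.le hΦc hL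
  · exact existsUnique_fixedPoint_Ici hΦc fun n => hΦ _ isCompact_Icc Icc_subset_Ici_self

end HistoryDependent

theorem inclusion_state_dependent_constraint_existence_uniqueness_general
    {X : Type*} [NormedAddCommGroup X] [InnerProductSpace ℝ X] [CompleteSpace X]
    (I : Set ℝ) (hI : (∃ T : ℝ, 0 < T ∧ I = Set.Icc 0 T) ∨ I = Set.Ici 0)
    (K : Set X) (hKne : K.Nonempty) (hKcl : IsClosed K) (hKcv : Convex ℝ K)
    (A : X → X) (mA : ℝ)
    (hAmono : ∀ u v : X, mA * ‖u - v‖ ^ 2 ≤ ⟪A u - A v, u - v⟫)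
    (hAlip : ∃ LA : ℝ, 0 < LA ∧ ∀ u v : X, ‖A u - A v‖ ≤ LA * ‖u - v‖)
    (S : (ℝ → X) → (ℝ → X))
    (hSmap : ∀ u : ℝ → X, Continuous u → Continuous (S u))
    (LS : Set ℝ → ℝ)
    (hS : ∀ J : Set ℝ, IsCompact J → J ⊆ I → 0 < LS J ∧
      ∀ u₁ u₂ : ℝ → X, Continuous u₁ → Continuous u₂ → ∀ t ∈ J,
        ‖S u₁ t - S u₂ t‖ ≤ LS J * ∫ s in (0:ℝ)..t, ‖u₁ s - u₂ s‖)
    (j : X → X → ℝ)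
    (hjconv : ∀ η : X, ConvexOn ℝ K (j η))
    (hjlip : ∀ η : X, ∃ Lj : ℝ, ∀ v ∈ K, ∀ w ∈ K, |j η v - j η w| ≤ Lj * ‖v - w‖)
    (αj : ℝ) (hαj : 0 ≤ αj)
    (hjb : ∀ η₁ η₂ : X, ∀ v₁ ∈ K, ∀ v₂ ∈ K,
      j η₁ v₂ - j η₁ v₁ + j η₂ v₁ - j η₂ v₂ ≤ αj * ‖η₁ - η₂‖ * ‖v₁ - v₂‖)
    (f : ℝ → X) (hf : Continuous f)
    (hsmall : αj + 1 < mA) :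
    ∃ u : ℝ → X,
      (Continuous u ∧ ∀ t ∈ I, u t ∈ K ∧
        ∀ v ∈ K, j (u t) v - j (u t) (u t) ≥ ⟪f t - A (u t) - S u t, v - u t⟫) ∧
      ∀ u' : ℝ → X,
        (Continuous u' ∧ ∀ t ∈ I, u' t ∈ K ∧
          ∀ v ∈ K, j (u' t) v - j (u' t) (u' t) ≥
            ⟪f t - A (u' t) - S u' t, v - u' t⟫) →
        ∀ t ∈ I, u' t = u t := by
  obtain ⟨LA, hLA, hAL⟩ := hAlip
  have hαm : 0 < mA - αj := by linarith
  choose σ hσ using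
    exists_solvesVI_self hKne hKcl hKcv hAmono hLA hAL hjconv hjlip hαj hjb (by linarith)
  have hσL : ∀ g₁ g₂, ‖σ g₁ - σ g₂‖ ≤ (mA - αj)⁻¹ * ‖g₁ - g₂‖ := fun g₁ g₂ =>
    (le_inv_mul_iff₀ hαm).2 ((hσ g₁).mul_norm_sub_le hAmono hjb (hσ g₂))
  have hσc : Continuous σ := (LipschitzWith.of_dist_le' fun g₁ g₂ => by
    simpa only [dist_eq_norm] using hσL g₁ g₂).continuous
  have hσ_iff : ∀ g w, SolvesVI K A (j w) g w ↔ w = σ g := fun g w =>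
    ⟨fun h => h.eq_of_self hAmono hjb (by linarith) (hσ g), fun h => h ▸ hσ g⟩
  have hsol : ∀ (w : ℝ → X) (t : ℝ), (w t ∈ K ∧ ∀ v ∈ K,
      j (w t) v - j (w t) (w t) ≥ ⟪f t - A (w t) - S w t, v - w t⟫) ↔ w t = σ (f t - S w t) :=
    fun w t => by rw [← hσ_iff, SolvesVI, sub_right_comm]
  obtain ⟨u, hu, hufix, huniq⟩ := existsUnique_fixedPoint_of_historyDependentOn
    (Φ := fun u t => σ (f t - S u t)) hI (fun u hu => hσc.comp (hf.sub (hSmap u hu)))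
    fun J hJ hJI => ⟨_, mul_nonneg (inv_nonneg.2 hαm.le) (hS J hJ hJI).1.le,
      HistoryDependentOn.comp_sub (hS J hJ hJI).2 (inv_nonneg.2 hαm.le) hσL f⟩
  exact ⟨u, ⟨hu, fun t ht => (hsol u t).2 (hufix ht)⟩, fun u' ⟨hu', h⟩ t ht =>
    huniq u' hu' (fun s hs => (hsol u' s).1 (h s hs)) ht⟩

/-- Corollary 3.2 of the paper (variational-inequality form of the inclusion
`-u(t) ∈ N_{C(u(t),t)}(Au(t) + Su(t))`): with `Y = X`, `R = id`, `S`
history-dependent, and the smallness condition `α_j + 1 < m_A`, there is a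
unique `u ∈ C(I;K)` with
`j(u(t),v) - j(u(t),u(t)) ≥ ⟪f(t) - Au(t) - Su(t), v - u(t)⟫` for all `v ∈ K`,
`t ∈ I`.  Here `I = [0,T]` or `I = [0,∞)`, and elements of `C(I;·)` are
represented by continuous functions on `ℝ`, unique up to their values on `I`. -/
theorem inclusion_state_dependent_constraint_existence_uniqueness
    {X : Type*} [NormedAddCommGroup X] [InnerProductSpace ℝ X] [CompleteSpace X]
    (I : Set ℝ) (hI : (∃ T : ℝ, 0 < T ∧ I = Set.Icc 0 T) ∨ I = Set.Ici 0)
    (K : Set X) (hKne : K.Nonempty) (hKcl : IsClosed K) (hKcv : Convex ℝ K)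
    (hKcone : ∀ c : ℝ, 0 < c → ∀ x ∈ K, c • x ∈ K) (hK0 : (0 : X) ∈ K)
    (A : X → X) (mA : ℝ) (hmA : 0 < mA)
    (hAmono : ∀ u v : X, mA * ‖u - v‖ ^ 2 ≤ ⟪A u - A v, u - v⟫)
    (hAlip : ∃ LA : ℝ, 0 < LA ∧ ∀ u v : X, ‖A u - A v‖ ≤ LA * ‖u - v‖)
    (S : (ℝ → X) → (ℝ → X))
    (hSmap : ∀ u : ℝ → X, Continuous u → Continuous (S u))
    (LS : Set ℝ → ℝ)
    (hS : ∀ J : Set ℝ, IsCompact J → J ⊆ I → 0 < LS J ∧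
      ∀ u₁ u₂ : ℝ → X, Continuous u₁ → Continuous u₂ → ∀ t ∈ J,
        ‖S u₁ t - S u₂ t‖ ≤ LS J * ∫ s in (0:ℝ)..t, ‖u₁ s - u₂ s‖)
    (j : X → X → ℝ)
    (hjconv : ∀ η : X, ConvexOn ℝ K (j η))
    (hjpos : ∀ η : X, ∀ l : ℝ, 0 < l → ∀ v ∈ K, j η (l • v) = l * j η v)
    (hjlip : ∀ η : X, ∃ Lj : ℝ, ∀ v ∈ K, ∀ w ∈ K, |j η v - j η w| ≤ Lj * ‖v - w‖)
    (αj : ℝ) (hαj : 0 ≤ αj)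
    (hjb : ∀ η₁ η₂ : X, ∀ v₁ ∈ K, ∀ v₂ ∈ K,
      j η₁ v₂ - j η₁ v₁ + j η₂ v₁ - j η₂ v₂ ≤ αj * ‖η₁ - η₂‖ * ‖v₁ - v₂‖)
    (f : ℝ → X) (hf : Continuous f)
    (hsmall : αj + 1 < mA) :
    ∃ u : ℝ → X,
      (Continuous u ∧ ∀ t ∈ I, u t ∈ K ∧
        ∀ v ∈ K, j (u t) v - j (u t) (u t) ≥ ⟪f t - A (u t) - S u t, v - u t⟫) ∧
      ∀ u' : ℝ → X,
        (Continuous u' ∧ ∀ t ∈ I, u' t ∈ K ∧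
          ∀ v ∈ K, j (u' t) v - j (u' t) (u' t) ≥
            ⟪f t - A (u' t) - S u' t, v - u' t⟫) →
        ∀ t ∈ I, u' t = u t :=
  inclusion_state_dependent_constraint_existence_uniqueness_general I hI K hKne hKcl hKcv A mA
    hAmono hAlip S hSmap LS hS j hjconv hjlip αj hαj hjb f hf hsmall
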